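/- (Equation (51) of the paper, rewriting of the total energy.) Assume the abstract FDTD-Q region setup (only update (UpdB) is used). Then for all n ≥ 1, ℋ n = ψR (n-1) ⬝ᵥ H.mulVec (ψR n) + ψI n ⬝ᵥ H.mulVec (ψI n) + (ψR n - ψR (n-1)) ⬝ᵥ H⊥.mulVec (gR n). In particular, when H⊥.mulVec (gR n) = 0 the total energy equals the staggered expression ψR (n-1) ⬝ᵥ H.mulVec (ψR n) + ψI n ⬝ᵥ H.mulVec (ψI n). -/

import Mathlib

open Matrix

section

variable {ι R : Type*} [Fintype ι]

theorem div_mul_dotProduct_eq_of_smul_eq {K : Type*} [Field K] {a b : K} (hb : b ≠ 0)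
    {v w : ι → K} (h : a • v = b • w) (u : ι → K) :
    a / b * (u ⬝ᵥ v) = u ⬝ᵥ w := by
  have hdot : a * (u ⬝ᵥ v) = b * (u ⬝ᵥ w) := by
    simpa only [dotProduct_smul, smul_eq_mul] using congrArg (u ⬝ᵥ ·) h
  rw [div_mul_eq_mul_div, hdot, mul_div_cancel_left₀ _ hb]

theorem dotProduct_add_sub_dotProduct_neg_add [CommRing R] (x y a b : ι → R) :
    x ⬝ᵥ a + (x - y) ⬝ᵥ (-a + b) = y ⬝ᵥ a + (x - y) ⬝ᵥ b := by
  simp only [dotProduct_add, sub_dotProduct, dotProduct_neg]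
  ring

end

theorem fdtdq_energy_staggered_form
    (N M : ℕ) (ℏ Δt : ℝ) (hΔt : 0 < Δt)
    (H : Matrix (Fin N) (Fin N) ℝ)
    (Hb : Matrix (Fin N) (Fin M) ℝ)
    (d : Fin N → ℝ)
    (ψR ψI : ℕ → (Fin N → ℝ)) (gR : ℕ → (Fin M → ℝ))
    (hUpdB : ∀ n : ℕ, ℏ • (Matrix.diagonal d).mulVec (ψI (n+1) - ψI n)
        = Δt • (-(H.mulVec (ψR n)) + Hb.mulVec (gR n)))
    (En : ℕ → ℝ)
    (hEn : ∀ n : ℕ, 1 ≤ n → En n = ψR n ⬝ᵥ H.mulVec (ψR n)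
        + ψI n ⬝ᵥ H.mulVec (ψI n)
        + (ℏ/Δt) * ((ψR n - ψR (n-1)) ⬝ᵥ (Matrix.diagonal d).mulVec (ψI (n+1) - ψI n))) :
    (∀ n : ℕ, 1 ≤ n → En n = ψR (n-1) ⬝ᵥ H.mulVec (ψR n)
        + ψI n ⬝ᵥ H.mulVec (ψI n)
        + (ψR n - ψR (n-1)) ⬝ᵥ Hb.mulVec (gR n))
    ∧ (∀ n : ℕ, 1 ≤ n → Hb.mulVec (gR n) = 0 →
        En n = ψR (n-1) ⬝ᵥ H.mulVec (ψR n) + ψI n ⬝ᵥ H.mulVec (ψI n)) := by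
  have staggered : ∀ n : ℕ, 1 ≤ n → En n = ψR (n-1) ⬝ᵥ H.mulVec (ψR n)
      + ψI n ⬝ᵥ H.mulVec (ψI n)
      + (ψR n - ψR (n-1)) ⬝ᵥ Hb.mulVec (gR n) := by
    intro n hn
    rw [hEn n hn, div_mul_dotProduct_eq_of_smul_eq hΔt.ne' (hUpdB n), add_right_comm,
      dotProduct_add_sub_dotProduct_neg_add, add_right_comm]
  refine ⟨staggered, fun n hn hb => ?_⟩
  rw [staggered n hn, hb, dotProduct_zero, add_zero]
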